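/- Let m ≥ 1, let y_0 < y_1 < ⋯ < y_m be real numbers, let c_j < d_j for j ∈ {1,…,m}, let L_{2,j} : ℝ → ℝ be the affine map with L_{2,j}(c_j) = y_{j−1} and L_{2,j}(d_j) = y_j, and define φ_j(y) = d_j if y > y_j, φ_j(y) = L_{2,j}^{−1}(y) if y_{j−1} ≤ y ≤ y_j, φ_j(y) = c_j if y < y_{j−1}. Let f : ℝ × ℝ → ℝ and set f_{0,j}(x,y) = f(x, L_{2,j}(y)). Then for every real number x_i and every y ∈ [y_0, y_m], f(x_i, y) = ∑_{j=1}^m f_{0,j}(x_i, φ_j(y)) − ∑_{j=1}^{m−1} f(x_i, y_j). -/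

import Mathlib

/-- The affine map `L_{2,j}(t) = y_{j−1} + (t − c_j)·(y_j − y_{j−1})/(d_j − c_j)`,
so that `L_{2,j}(c_j) = y_{j−1}` and `L_{2,j}(d_j) = y_j`. -/
noncomputable def LFun (y c d : ℕ → ℝ) (j : ℕ) (t : ℝ) : ℝ :=
  y (j - 1) + (t - c j) * (y j - y (j - 1)) / (d j - c j)

/-- The clamped inverse of `L_{2,j}`:
`φ_j(t) = d_j` for `t > y_j`, `φ_j(t) = L_{2,j}⁻¹(t)` on `[y_{j−1}, y_j]`,
and `φ_j(t) = c_j` for `t < y_{j−1}`. -/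
noncomputable def clampInv (y c d : ℕ → ℝ) (j : ℕ) (t : ℝ) : ℝ :=
  if y j < t then d j
  else if y (j - 1) ≤ t then c j + (t - y (j - 1)) * (d j - c j) / (y j - y (j - 1))
  else c j

lemma LFun_clampInv (y c d : ℕ → ℝ) (j : ℕ) (v : ℝ) (hy : y (j - 1) < y j)
    (hcd : c j ≠ d j) :
    LFun y c d j (clampInv y c d j v) = max (y (j - 1)) (min (y j) v) := by
  have hdc : d j - c j ≠ 0 := sub_ne_zero.mpr hcd.symm
  have hyy : y j - y (j - 1) ≠ 0 := sub_ne_zero.mpr hy.ne'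
  unfold LFun clampInv
  split_ifs with hgt hge
  · field_simp
    simp [min_eq_left hgt.le, max_eq_right hy.le]
  · field_simp
    simp only [min_eq_right (not_lt.mp hgt), max_eq_right hge]
    ring
  · simp [max_eq_left ((min_le_right _ _).trans (not_le.mp hge).le)]

/-- The interval `[y (j-1), y j]` containing `v` contributes `g v`; every other one contributes
the value at an end point, and these cancel against the interior knots. -/
theorem apply_eq_sum_clamp_sub_sum_knots (g : ℝ → ℝ) (y : ℕ → ℝ) {m : ℕ}
    (hm : 1 ≤ m) (hmono : MonotoneOn y (Set.Iic m)) {v : ℝ} (hv : v ∈ Set.Icc (y 0) (y m)) :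
    g v = (∑ j ∈ Finset.Icc 1 m, g (max (y (j - 1)) (min (y j) v)))
      - ∑ j ∈ Finset.Icc 1 (m - 1), g (y j) := by
  induction m, hm using Nat.le_induction generalizing v with
  | base =>
    simp [max_eq_right hv.1, min_eq_right hv.2]
  | succ n hn ih =>
    have hmono' : MonotoneOn y (Set.Iic n) := hmono.mono (Set.Iic_subset_Iic.mpr n.le_succ)
    have hyn : y n ≤ y (n + 1) := hmono (by simp) (by simp) n.le_succ
    have knots : ∑ j ∈ Finset.Icc 1 n, g (y j)
        = ∑ j ∈ Finset.Icc 1 (n - 1), g (y j) + g (y n) := by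
      obtain ⟨k, rfl⟩ := Nat.exists_eq_add_of_le' hn
      simpa using Finset.sum_Icc_succ_top (by omega : 1 ≤ k + 1) fun j ↦ g (y j)
    rw [Finset.sum_Icc_succ_top (by omega), Nat.add_sub_cancel]
    rcases le_or_gt v (y n) with hvn | hnv
    · have last : max (y n) (min (y (n + 1)) v) = y n := by
        rw [min_eq_right (hvn.trans hyn), max_eq_left hvn]
      rw [last, knots, ih hmono' ⟨hv.1, hvn⟩]
      ring
    · have below : ∀ j ∈ Finset.Icc 1 n, max (y (j - 1)) (min (y j) v) = y j := by
        intro j hj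
        rw [Finset.mem_Icc] at hj
        have hjn : y j ≤ y n := hmono' (by simp [hj.2]) (by simp) hj.2
        have hj1 : y (j - 1) ≤ y j :=
          hmono' (by simp only [Set.mem_Iic]; omega) (by simp [hj.2]) (Nat.sub_le j 1)
        rw [min_eq_left (hjn.trans hnv.le), max_eq_right hj1]
      rw [Finset.sum_congr rfl fun j hj ↦ congrArg g (below j hj),
        min_eq_right hv.2, max_eq_right hnv.le]
      ring

/-- Decomposition in the second variable at a fixed first coordinate:
`f(x_i, y) = ∑_{j=1}^m f_{0,j}(x_i, φ_j(y)) − ∑_{j=1}^{m−1} f(x_i, y_j)`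
for every real `x_i` and every `y ∈ [y_0, y_m]`, where
`f_{0,j}(x, y) = f(x, L_{2,j}(y))`. -/
theorem decomposition_second_variable (m : ℕ) (hm : 1 ≤ m) (y c d : ℕ → ℝ)
    (hy : ∀ j ∈ Finset.Icc 1 m, y (j - 1) < y j)
    (hcd : ∀ j ∈ Finset.Icc 1 m, c j < d j)
    (f : ℝ → ℝ → ℝ) :
    ∀ xi : ℝ, ∀ v ∈ Set.Icc (y 0) (y m),
      f xi v = (∑ j ∈ Finset.Icc 1 m, f xi (LFun y c d j (clampInv y c d j v)))
                 - ∑ j ∈ Finset.Icc 1 (m - 1), f xi (y j) := by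
  intro xi v hv
  have hmono : MonotoneOn y (Set.Iic m) :=
    (strictMonoOn_Iic_of_lt_succ fun k hk ↦ by
      simpa using hy (k + 1) (Finset.mem_Icc.mpr ⟨Nat.le_add_left 1 k, hk⟩)).monotoneOn
  rw [Finset.sum_congr rfl fun j hj ↦
    congrArg (f xi) (LFun_clampInv y c d j v (hy j hj) (hcd j hj).ne)]
  exact apply_eq_sum_clamp_sub_sum_knots (f xi) y hm hmono hv
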